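/- arXiv:2601.06889 — 3 statements merged into one kernel-verified Lean document; each statement's English description precedes it below -/
import Mathlib

section
/- For every t ≥ 0, s₁ ≥ 0 and β > 0, the integral over ℝ² of |ξ|^{2s₁} e^{-2|ξ|^{2β} t} restricted to the ball |ξ| ≤ η (with η > 0 fixed) is bounded below by C_β (1+t)^{-(1+s₁)/β} for some constant C_β > 0 depending on η, s₁, β. -/
open MeasureTheory Real Metric

/-- Lower bound for the low-frequency integral ∫_{|ξ|≤η} |ξ|^{2s₁} e^{-2|ξ|^{2β} t} dξ
    by C_β (1+t)^{-(1+s₁)/β}. -/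
theorem stmt0 (η s₁ β : ℝ) (hη : 0 < η) (hs₁ : 0 ≤ s₁) (hβ : 0 < β) :
    ∃ C : ℝ, 0 < C ∧ ∀ t : ℝ, 0 ≤ t →
      C * (1 + t) ^ (-(1 + s₁) / β) ≤
        ∫ ξ in Metric.closedBall (0 : EuclideanSpace ℝ (Fin 2)) η,
          ‖ξ‖ ^ (2 * s₁) * Real.exp (-2 * ‖ξ‖ ^ (2 * β) * t) := by
  set E := EuclideanSpace ℝ (Fin 2)
  set m : ℝ := min η 1 with hm
  have hm0 : 0 < m := lt_min hη one_pos
  have hm1 : m ≤ 1 := min_le_right _ _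
  have hmη : m ≤ η := min_le_left _ _
  set V : ℝ := (volume (ball (0 : E) 1)).toReal with hV
  have hVpos : 0 < V := by
    apply ENNReal.toReal_pos (measure_ball_pos volume _ one_pos).ne'
    exact (measure_ball_lt_top).ne
  refine ⟨(m / 2) ^ (2 * s₁) * ((m / 8) ^ (2 : ℕ) * V) * Real.exp (-2), ?_, ?_⟩
  · positivity
  intro t ht
  have h1t : (0 : ℝ) < 1 + t := by linarith
  set u : ℝ := (1 + t) ^ (-1 / (2 * β)) with hu
  have hu0 : 0 < u := rpow_pos_of_pos h1t _
  have hu1 : u ≤ 1 := by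
    apply rpow_le_one_of_one_le_of_nonpos (by linarith)
    rw [neg_div]
    exact neg_nonpos.mpr (by positivity)
  set r : ℝ := m * u with hr
  have hr0 : 0 < r := mul_pos hm0 hu0
  have hrm : r ≤ m := by nlinarith
  -- key: r ^ (2β) * t ≤ 1
  have hrpow : r ^ (2 * β) * t ≤ 1 := by
    have h1 : r ^ (2 * β) = m ^ (2 * β) * (1 + t)⁻¹ := by
      rw [hr, mul_rpow hm0.le hu0.le, hu, ← Real.rpow_mul h1t.le]
      congr 1
      rw [show -1 / (2 * β) * (2 * β) = -1 by field_simp, Real.rpow_neg_one]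
    have h2 : m ^ (2 * β) ≤ 1 := rpow_le_one hm0.le hm1 (by positivity)
    have h3 : r ^ (2 * β) ≤ (1 + t)⁻¹ := by
      rw [h1]
      nlinarith [inv_pos.mpr h1t]
    calc r ^ (2 * β) * t ≤ (1 + t)⁻¹ * t := by nlinarith
      _ ≤ 1 := by rw [inv_mul_le_iff₀ h1t]; linarith
  -- the small ball inside the annulus
  set a : E := EuclideanSpace.single (0 : Fin 2) (3 * r / 4) with ha
  have hna : ‖a‖ = 3 * r / 4 := by
    rw [ha, EuclideanSpace.norm_single]
    rw [Real.norm_eq_abs, abs_of_nonneg (by linarith)]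
  have hlow' : ∀ ξ ∈ closedBall a (r / 8), r / 2 ≤ ‖ξ‖ ∧ ‖ξ‖ ≤ 7 * r / 8 := by
    intro ξ hξ
    rw [mem_closedBall, dist_eq_norm] at hξ
    have h1 := abs_norm_sub_norm_le ξ a
    rw [abs_le] at h1
    rw [hna] at h1
    constructor <;> linarith [h1.1, h1.2]
  have hsub : closedBall a (r / 8) ⊆ closedBall (0 : E) η := by
    intro ξ hξ
    rw [mem_closedBall, dist_zero_right]
    have := (hlow' ξ hξ).2
    nlinarith
  have hlow : ∀ ξ ∈ closedBall a (r / 8), r / 2 ≤ ‖ξ‖ ∧ ‖ξ‖ ≤ r := by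
    intro ξ hξ
    obtain ⟨h1, h2⟩ := hlow' ξ hξ
    exact ⟨h1, by linarith⟩
  -- continuity / integrability
  have hcont : Continuous fun ξ : E => ‖ξ‖ ^ (2 * s₁) * Real.exp (-2 * ‖ξ‖ ^ (2 * β) * t) := by
    apply Continuous.mul
    · exact (Real.continuous_rpow_const (by positivity)).comp continuous_norm
    · apply Real.continuous_exp.comp
      apply Continuous.mul _ continuous_const
      exact continuous_const.mul ((Real.continuous_rpow_const (by positivity)).comp continuous_norm)
  have hint : IntegrableOn (fun ξ : E => ‖ξ‖ ^ (2 * s₁) * Real.exp (-2 * ‖ξ‖ ^ (2 * β) * t))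
      (closedBall (0 : E) η) volume :=
    hcont.continuousOn.integrableOn_compact (isCompact_closedBall _ _)
  -- pointwise lower bound on the small ball
  have hbd : ∀ ξ ∈ closedBall a (r / 8),
      (r / 2) ^ (2 * s₁) * Real.exp (-2) ≤ ‖ξ‖ ^ (2 * s₁) * Real.exp (-2 * ‖ξ‖ ^ (2 * β) * t) := by
    intro ξ hξ
    obtain ⟨h1, h2⟩ := hlow ξ hξ
    have e1 : (r / 2) ^ (2 * s₁) ≤ ‖ξ‖ ^ (2 * s₁) :=
      rpow_le_rpow (by linarith) h1 (by positivity)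
    have e2 : Real.exp (-2) ≤ Real.exp (-2 * ‖ξ‖ ^ (2 * β) * t) := by
      apply Real.exp_le_exp.mpr
      have h3 : ‖ξ‖ ^ (2 * β) ≤ r ^ (2 * β) := rpow_le_rpow (norm_nonneg _) h2 (by positivity)
      have h4 : ‖ξ‖ ^ (2 * β) * t ≤ 1 := le_trans (by nlinarith [rpow_nonneg (norm_nonneg ξ) (2*β)]) hrpow
      nlinarith
    have := mul_le_mul e1 e2 (Real.exp_pos _).le (rpow_nonneg (by linarith) _)
    linarith
  -- volume of the small ball
  have hvol : (volume (closedBall a (r / 8))).toReal = (r / 8) ^ (2 : ℕ) * V := by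
    have hfr : Module.finrank ℝ E = 2 := by
      simp [E, finrank_euclideanSpace_fin]
    rw [Measure.addHaar_closedBall volume a (by linarith : (0:ℝ) ≤ r / 8), hfr,
      ENNReal.toReal_mul, ENNReal.toReal_ofReal (by positivity)]
  -- chain the inequalities
  have step1 : (r / 2) ^ (2 * s₁) * Real.exp (-2) * ((r / 8) ^ (2 : ℕ) * V) ≤
      ∫ ξ in closedBall a (r / 8), ‖ξ‖ ^ (2 * s₁) * Real.exp (-2 * ‖ξ‖ ^ (2 * β) * t) := by
    rw [← hvol]
    exact setIntegral_ge_of_const_le_real measurableSet_closedBall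
      (measure_closedBall_lt_top).ne hbd (hint.mono_set hsub)
  have step2 : ∫ ξ in closedBall a (r / 8), ‖ξ‖ ^ (2 * s₁) * Real.exp (-2 * ‖ξ‖ ^ (2 * β) * t) ≤
      ∫ ξ in closedBall (0 : E) η, ‖ξ‖ ^ (2 * s₁) * Real.exp (-2 * ‖ξ‖ ^ (2 * β) * t) := by
    apply setIntegral_mono_set hint
    · filter_upwards with ξ
      positivity
    · exact HasSubset.Subset.eventuallyLE hsub
  -- identify the constant
  have key : (m / 2) ^ (2 * s₁) * ((m / 8) ^ (2 : ℕ) * V) * Real.exp (-2) * (1 + t) ^ (-(1 + s₁) / β)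
      = (r / 2) ^ (2 * s₁) * Real.exp (-2) * ((r / 8) ^ (2 : ℕ) * V) := by
    have e1 : (r / 2) ^ (2 * s₁) = (m / 2) ^ (2 * s₁) * (1 + t) ^ (-1 / (2 * β) * (2 * s₁)) := by
      rw [hr, hu]
      rw [show m * (1 + t) ^ (-1 / (2 * β)) / 2 = (m / 2) * (1 + t) ^ (-1 / (2 * β)) by ring]
      rw [mul_rpow (by positivity) (rpow_nonneg h1t.le _), ← Real.rpow_mul h1t.le]
    have e2 : ((r / 8) : ℝ) ^ (2 : ℕ) = (m / 8) ^ (2 : ℕ) * (1 + t) ^ (-1 / (2 * β) * 2) := by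
      rw [hr, hu]
      rw [show m * (1 + t) ^ (-1 / (2 * β)) / 8 = (m / 8) * (1 + t) ^ (-1 / (2 * β)) by ring]
      rw [mul_pow]
      congr 1
      rw [← Real.rpow_natCast ((1 + t) ^ (-1 / (2 * β))) 2, ← Real.rpow_mul h1t.le]
      norm_num
    rw [e1, e2]
    rw [show -(1 + s₁) / β = -1 / (2 * β) * (2 * s₁) + -1 / (2 * β) * 2 by field_simp; ring]
    rw [Real.rpow_add h1t]
    ring
  calc (m / 2) ^ (2 * s₁) * ((m / 8) ^ (2 : ℕ) * V) * Real.exp (-2) * (1 + t) ^ (-(1 + s₁) / β)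
      = (r / 2) ^ (2 * s₁) * Real.exp (-2) * ((r / 8) ^ (2 : ℕ) * V) := key
    _ ≤ _ := le_trans step1 step2
end

section
/- Suppose E₀ : [0,∞) → [0,∞) is differentiable, D₀ : [0,∞) → [0,∞), E₀' + D₀ ≤ 0, E₀(t) ≤ C(1+t)^{-1/β}, and 1 - 1/(2β) < δ < 1/(2β) with 1/2 ≤ β < 1. Then (1+t)^δ E₀(t) + ∫₀^t (1+t')^δ D₀(t') dt' ≤ C' for all t ≥ 0, for some constant C' depending on C, δ, β. -/
open MeasureTheory Real intervalIntegral

/-- Weighted energy estimate: if E₀' + D₀ ≤ 0, E₀(t) ≤ C(1+t)^{-1/β} and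
    1 - 1/(2β) < δ < 1/(2β) with 1/2 ≤ β < 1, then
    (1+t)^δ E₀(t) + ∫₀^t (1+t')^δ D₀(t') dt' ≤ C'. -/
theorem stmt12 (E₀ E₀' D₀ : ℝ → ℝ) (C β δ : ℝ) (hC : 0 < C)
    (hβ1 : (1:ℝ)/2 ≤ β) (hβ2 : β < 1)
    (hδ1 : 1 - 1 / (2 * β) < δ) (hδ2 : δ < 1 / (2 * β))
    (hEpos : ∀ t, 0 ≤ t → 0 ≤ E₀ t)
    (hDpos : ∀ t, 0 ≤ t → 0 ≤ D₀ t)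
    (hderiv : ∀ t, 0 ≤ t → HasDerivAt E₀ (E₀' t) t)
    (hDint : ∀ t : ℝ, IntervalIntegrable D₀ volume 0 t)
    (hineq : ∀ t, 0 ≤ t → E₀' t + D₀ t ≤ 0)
    (hdecay : ∀ t, 0 ≤ t → E₀ t ≤ C * (1 + t) ^ (-(1 / β))) :
    ∃ C' : ℝ, 0 < C' ∧ ∀ t, 0 ≤ t →
      (1 + t) ^ δ * E₀ t + (∫ t' in (0:ℝ)..t, (1 + t') ^ δ * D₀ t') ≤ C' := by
  have hβ0 : 0 < β := lt_of_lt_of_le (by norm_num) hβ1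
  have hδβ : δ < 1 / β := lt_of_lt_of_le hδ2 (by
    rw [div_le_div_iff₀ (by positivity) hβ0]; nlinarith)
  set r : ℝ := δ - 1 - 1 / β with hr_def
  have hr : r < -1 := by simp only [hr_def]; linarith
  have hs : 0 < 1 / β - δ := by linarith
  set K : ℝ := |δ| * C * (1 / (1 / β - δ)) with hK_def
  have hK0 : 0 ≤ K := by positivity
  refine ⟨E₀ 0 + K + 1, by have := hEpos 0 le_rfl; linarith, fun t ht => ?_⟩
  have hWcont : ∀ (p x : ℝ), 0 < 1 + x → ContinuousAt (fun x : ℝ => (1 + x) ^ p) x := by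
    intro p x hx
    exact (Real.continuousAt_rpow_const _ _ (Or.inl hx.ne')).comp
      (continuousAt_const.add continuousAt_id)
  have hEcont : ∀ s ∈ Set.Icc (0:ℝ) t, ContinuousWithinAt E₀ (Set.Icc 0 t) s :=
    fun s hs => ((hderiv s hs.1).continuousAt).continuousWithinAt
  set g : ℝ → ℝ := fun x => (1 + x) ^ δ * E₀ x with hg_def
  set φ : ℝ → ℝ := fun x => δ * (1 + x) ^ (δ - 1) * E₀ x - (1 + x) ^ δ * D₀ x with hφ_def
  -- derivative of g
  have hgderiv : ∀ x ∈ Set.Ioo (0:ℝ) t,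
      HasDerivAt g (δ * (1 + x) ^ (δ - 1) * E₀ x + (1 + x) ^ δ * E₀' x) x := by
    intro x hx
    have h1x : (0:ℝ) < 1 + x := by linarith [hx.1]
    have hw : HasDerivAt (fun x : ℝ => (1 + x) ^ δ) (δ * (1 + x) ^ (δ - 1)) x := by
      have := (Real.hasDerivAt_rpow_const (p := δ) (x := 1 + x) (Or.inl h1x.ne')).comp x
        ((hasDerivAt_id x).const_add 1)
      simpa [Function.comp_def] using this
    have h := hw.mul (hderiv x hx.1.le)
    exact h
  -- weighted D₀ integrable
  have hWDint : IntervalIntegrable (fun x => (1 + x) ^ δ * D₀ x) volume 0 t := by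
    apply (hDint t).continuousOn_mul
    intro x hx
    have h1x : (0:ℝ) < 1 + x := by
      rcases hx with ⟨h1, _⟩
      have : (0:ℝ) ≤ x := le_trans (by simp [min_eq_left ht, ht]) h1
      linarith
    exact (hWcont δ x h1x).continuousWithinAt
  have hWDIcc : IntegrableOn (fun x => (1 + x) ^ δ * D₀ x) (Set.Icc 0 t) volume := by
    rw [integrableOn_Icc_iff_integrableOn_Ioc]
    simpa [intervalIntegrable_iff_integrableOn_Ioc_of_le ht] using hWDint
  have hAcont : ContinuousOn (fun x => δ * (1 + x) ^ (δ - 1) * E₀ x) (Set.Icc 0 t) := by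
    intro x hx
    have h1x : (0:ℝ) < 1 + x := by linarith [hx.1]
    exact ContinuousWithinAt.mul
      (continuousWithinAt_const.mul (hWcont (δ - 1) x h1x).continuousWithinAt)
      (hEcont x hx)
  have hAint : IntegrableOn (fun x => δ * (1 + x) ^ (δ - 1) * E₀ x) (Set.Icc 0 t) volume :=
    hAcont.integrableOn_compact isCompact_Icc
  have hφint : IntegrableOn φ (Set.Icc 0 t) volume := hAint.sub hWDIcc
  -- main inequality via FTC-type lemma
  have hmain : g t - g 0 ≤ ∫ y in (0:ℝ)..t, φ y := by
    apply sub_le_integral_of_hasDeriv_right_of_le ht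
    · intro x hx
      have h1x : (0:ℝ) < 1 + x := by linarith [hx.1]
      exact ContinuousWithinAt.mul (hWcont δ x h1x).continuousWithinAt (hEcont x hx)
    · intro x hx
      exact (hgderiv x hx).hasDerivWithinAt
    · exact hφint
    · intro x hx
      have h1x : (0:ℝ) < 1 + x := by linarith [hx.1]
      have hw : (0:ℝ) ≤ (1 + x) ^ δ := (Real.rpow_pos_of_pos h1x δ).le
      have := mul_le_mul_of_nonneg_left (by linarith [hineq x hx.1.le] : E₀' x ≤ - D₀ x) hw
      simp only [hφ_def]
      nlinarith
  have hAI : IntervalIntegrable (fun x => δ * (1 + x) ^ (δ - 1) * E₀ x) volume 0 t := by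
    rw [intervalIntegrable_iff_integrableOn_Ioc_of_le ht]
    exact hAint.mono_set Set.Ioc_subset_Icc_self
  have hsplit : (∫ y in (0:ℝ)..t, φ y) =
      (∫ y in (0:ℝ)..t, δ * (1 + y) ^ (δ - 1) * E₀ y) -
      (∫ y in (0:ℝ)..t, (1 + y) ^ δ * D₀ y) := by
    simp only [hφ_def]
    exact intervalIntegral.integral_sub hAI hWDint
  -- pointwise bound
  have hptwise : ∀ y ∈ Set.Icc (0:ℝ) t,
      δ * (1 + y) ^ (δ - 1) * E₀ y ≤ |δ| * C * (1 + y) ^ r := by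
    intro y hy
    have h1y : (0:ℝ) < 1 + y := by linarith [hy.1]
    have hw : (0:ℝ) ≤ (1 + y) ^ (δ - 1) := (Real.rpow_pos_of_pos h1y _).le
    have hE : 0 ≤ E₀ y := hEpos y hy.1
    have h2 : (1 + y) ^ (δ - 1) * E₀ y ≤ (1 + y) ^ (δ - 1) * (C * (1 + y) ^ (-(1 / β))) :=
      mul_le_mul_of_nonneg_left (hdecay y hy.1) hw
    have h3 : (1 + y) ^ (δ - 1) * (1 + y) ^ (-(1 / β)) = (1 + y) ^ r := by
      rw [← Real.rpow_add h1y, hr_def]; ring_nf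
    have h1 : δ * ((1 + y) ^ (δ - 1) * E₀ y) ≤ |δ| * ((1 + y) ^ (δ - 1) * E₀ y) :=
      mul_le_mul_of_nonneg_right (le_abs_self δ) (mul_nonneg hw hE)
    calc δ * (1 + y) ^ (δ - 1) * E₀ y = δ * ((1 + y) ^ (δ - 1) * E₀ y) := by ring
      _ ≤ |δ| * ((1 + y) ^ (δ - 1) * E₀ y) := h1
      _ ≤ |δ| * ((1 + y) ^ (δ - 1) * (C * (1 + y) ^ (-(1 / β)))) :=
          mul_le_mul_of_nonneg_left h2 (abs_nonneg δ)
      _ = |δ| * C * ((1 + y) ^ (δ - 1) * (1 + y) ^ (-(1 / β))) := by ring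
      _ = |δ| * C * (1 + y) ^ r := by rw [h3]
  have hRI : IntervalIntegrable (fun y => |δ| * C * (1 + y) ^ r) volume 0 t := by
    apply ContinuousOn.intervalIntegrable
    intro x hx
    have h1x : (0:ℝ) < 1 + x := by
      have : (0:ℝ) ≤ x := le_trans (by simp [min_eq_left ht, ht]) hx.1
      linarith
    exact continuousWithinAt_const.mul (hWcont r x h1x).continuousWithinAt
  have h1t : (0:ℝ) < 1 + t := by linarith
  have hrint : (∫ y in (0:ℝ)..t, (1 + y) ^ r) ≤ 1 / (1 / β - δ) := by
    have hcomp := intervalIntegral.integral_comp_add_left (a := (0:ℝ)) (b := t)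
      (fun x : ℝ => x ^ r) 1
    rw [show (1:ℝ) + 0 = 1 by norm_num] at hcomp
    rw [hcomp, integral_rpow (Or.inr ⟨hr.ne, by
      rw [Set.uIcc_of_le (by linarith)]
      rintro ⟨h0, _⟩; linarith⟩)]
    rw [Real.one_rpow]
    have hpow : (0:ℝ) < (1 + t) ^ (r + 1) := Real.rpow_pos_of_pos h1t _
    rw [div_le_iff_of_neg (by linarith : r + 1 < 0)]
    have hkey : 1 / (1 / β - δ) * (r + 1) = -1 := by
      have hre : r + 1 = -(1 / β - δ) := by rw [hr_def]; ring
      rw [hre, mul_neg, one_div_mul_cancel hs.ne']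
    rw [hkey]
    linarith
  have hAbound : (∫ y in (0:ℝ)..t, δ * (1 + y) ^ (δ - 1) * E₀ y) ≤ K := by
    calc (∫ y in (0:ℝ)..t, δ * (1 + y) ^ (δ - 1) * E₀ y)
        ≤ ∫ y in (0:ℝ)..t, |δ| * C * (1 + y) ^ r :=
          intervalIntegral.integral_mono_on ht hAI hRI hptwise
      _ = |δ| * C * ∫ y in (0:ℝ)..t, (1 + y) ^ r := by
          rw [← intervalIntegral.integral_const_mul]
      _ ≤ K := by
          rw [hK_def]
          exact mul_le_mul_of_nonneg_left hrint (by positivity)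
  have hg0 : g 0 = E₀ 0 := by simp [hg_def]
  have hfin : g t + (∫ y in (0:ℝ)..t, (1 + y) ^ δ * D₀ y) ≤ E₀ 0 + K := by
    rw [hsplit] at hmain; linarith
  simp only [hg_def] at hfin
  linarith
end

section
/- Suppose E₀ : [0,∞) → [0,∞) is differentiable, D₀ : [0,∞) → [0,∞), E₀'(t) + D₀(t) ≤ 0 for all t, and E₀(t) ≤ C(1+t)^{-1/β} for some β > 0. Then (1+t)^{-1} ∫₀^t (1+t')^{1/β + 1} D₀(t') dt' ≤ C' for all t ≥ 0. -/
/-!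
Multiplying the energy inequality by the weight `(1 + t)^(1/β + 1)` gives
`d/dt [(1 + t)^(1/β + 1) E₀] + (1 + t)^(1/β + 1) D₀ ≤ (1/β + 1) (1 + t)^(1/β) E₀ ≤ (1/β + 1) C`,
the last step by the decay of `E₀`. Integrating over `[0, t]` and dropping the nonnegative
weighted energy at time `t` bounds the weighted dissipation by `E₀ 0 + (1/β + 1) C t`,
which is `O(1 + t)`.
-/

open MeasureTheory Real intervalIntegral Set

theorem integral_le_sub_add_of_hasDerivAt_add_le {F F' G : ℝ → ℝ} {a b c : ℝ} (hab : a ≤ b)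
    (hF : ∀ x ∈ Icc a b, HasDerivAt F (F' x) x) (hG : IntervalIntegrable G volume a b)
    (hle : ∀ x ∈ Ioo a b, F' x + G x ≤ c) :
    ∫ x in a..b, G x ≤ F a - F b + c * (b - a) := by
  have hFTC : F b - F a ≤ ∫ x in a..b, (c - G x) :=
    sub_le_integral_of_hasDeriv_right_of_le hab
      (fun x hx => (hF x hx).continuousAt.continuousWithinAt)
      (fun x hx => (hF x (Ioo_subset_Icc_self hx)).hasDerivWithinAt)
      ((intervalIntegrable_iff_integrableOn_Icc_of_le hab).mp
        (intervalIntegrable_const.sub hG))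
      (fun x hx => by linarith [hle x hx])
  rw [integral_sub intervalIntegrable_const hG, intervalIntegral.integral_const, smul_eq_mul] at hFTC
  linarith

theorem hasDerivAt_one_add_rpow_mul {E : ℝ → ℝ} {e' q x : ℝ} (hx : 0 < 1 + x)
    (hE : HasDerivAt E e' x) :
    HasDerivAt (fun s => (1 + s) ^ (q + 1) * E s)
      ((q + 1) * (1 + x) ^ q * E x + (1 + x) ^ (q + 1) * e') x := by
  have hw : HasDerivAt (fun s : ℝ => (1 + s) ^ (q + 1)) ((q + 1) * (1 + x) ^ q) x := by
    simpa using ((hasDerivAt_id x).const_add 1).rpow_const (p := q + 1) (Or.inl hx.ne')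
  exact hw.mul hE

theorem weighted_energy_deriv_add_le {q C x e e' d : ℝ} (hq : 0 ≤ q) (hx : 0 < 1 + x)
    (hdecay : e ≤ C * (1 + x) ^ (-q)) (hineq : e' + d ≤ 0) :
    (q + 1) * (1 + x) ^ q * e + (1 + x) ^ (q + 1) * e' + (1 + x) ^ (q + 1) * d
      ≤ (q + 1) * C := by
  have hdissip : (1 + x) ^ (q + 1) * (e' + d) ≤ 0 :=
    mul_nonpos_of_nonneg_of_nonpos (rpow_nonneg hx.le _) hineq
  have henergy : (1 + x) ^ q * e ≤ C :=
    calc (1 + x) ^ q * e ≤ (1 + x) ^ q * (C * (1 + x) ^ (-q)) :=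
          mul_le_mul_of_nonneg_left hdecay (rpow_nonneg hx.le _)
      _ = C := by rw [rpow_neg hx.le, mul_left_comm, mul_inv_cancel₀ (rpow_pos_of_pos hx q).ne',
          mul_one]
  nlinarith

theorem stmt13_general (E₀ E₀' D₀ : ℝ → ℝ) (C β : ℝ) (hC : 0 < C) (hβ : 0 < β)
    (hEpos : ∀ t, 0 ≤ t → 0 ≤ E₀ t)
    (hderiv : ∀ t, 0 ≤ t → HasDerivAt E₀ (E₀' t) t)
    (hDint : ∀ t : ℝ, IntervalIntegrable D₀ volume 0 t)
    (hineq : ∀ t, 0 ≤ t → E₀' t + D₀ t ≤ 0)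
    (hdecay : ∀ t, 0 ≤ t → E₀ t ≤ C * (1 + t) ^ (-(1 / β))) :
    ∃ C' : ℝ, 0 < C' ∧ ∀ t, 0 ≤ t →
      (1 + t)⁻¹ * (∫ t' in (0:ℝ)..t, (1 + t') ^ (1 / β + 1) * D₀ t') ≤ C' := by
  set q := 1 / β
  have hq : 0 ≤ q := by positivity
  refine ⟨E₀ 0 + (q + 1) * C, add_pos_of_nonneg_of_pos (hEpos 0 le_rfl) (by positivity), fun t ht => ?_⟩
  have hweight : IntervalIntegrable (fun s => (1 + s) ^ (q + 1) * D₀ s) volume 0 t :=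
    (hDint t).continuousOn_mul
      (ContinuousOn.rpow_const (by fun_prop) fun x hx => Or.inr (by positivity))
  have hbound := integral_le_sub_add_of_hasDerivAt_add_le (c := (q + 1) * C) ht
    (fun x hx => hasDerivAt_one_add_rpow_mul (q := q) (by linarith [hx.1]) (hderiv x hx.1)) hweight
    (fun x hx => weighted_energy_deriv_add_le hq (by linarith [hx.1]) (hdecay x hx.1.le)
      (hineq x hx.1.le))
  have hEt : 0 ≤ (1 + t) ^ (q + 1) * E₀ t := mul_nonneg (by positivity) (hEpos t ht)
  rw [inv_mul_le_iff₀ (by linarith)]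
  simp only [add_zero, one_rpow, one_mul, sub_zero] at hbound
  nlinarith [hEpos 0 le_rfl]

/-- Weighted dissipation bound: if E₀' + D₀ ≤ 0 and E₀(t) ≤ C(1+t)^{-1/β}, then
    (1+t)^{-1} ∫₀^t (1+t')^{1/β+1} D₀(t') dt' ≤ C'. -/
theorem stmt13 (E₀ E₀' D₀ : ℝ → ℝ) (C β : ℝ) (hC : 0 < C) (hβ : 0 < β)
    (hEpos : ∀ t, 0 ≤ t → 0 ≤ E₀ t)
    (hDpos : ∀ t, 0 ≤ t → 0 ≤ D₀ t)
    (hderiv : ∀ t, 0 ≤ t → HasDerivAt E₀ (E₀' t) t)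
    (hDint : ∀ t : ℝ, IntervalIntegrable D₀ volume 0 t)
    (hineq : ∀ t, 0 ≤ t → E₀' t + D₀ t ≤ 0)
    (hdecay : ∀ t, 0 ≤ t → E₀ t ≤ C * (1 + t) ^ (-(1 / β))) :
    ∃ C' : ℝ, 0 < C' ∧ ∀ t, 0 ≤ t →
      (1 + t)⁻¹ * (∫ t' in (0:ℝ)..t, (1 + t') ^ (1 / β + 1) * D₀ t') ≤ C' :=
  stmt13_general E₀ E₀' D₀ C β hC hβ hEpos hderiv hDint hineq hdecay
end
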